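/- arXiv:2104.09093 — 5 statements merged into one kernel-verified Lean document; each statement's English description precedes it below -/
import Mathlib

section
/- Let ε^op ∈ ℝ^M be defined by ε^op_m = (2^{-b_tot} ∏_{m'=1}^M ζ_{m'} √(p_{m'}/p_m))^{1/M}. Then ε^op is feasible for the pilot-distortion minimization problem and satisfies the ADC bit budget constraint with equality, i.e. ∑_{m=1}^M log₂(ζ_m/ε^op_m) = b_tot, and for every feasible ε (i.e. every ε ∈ ℝ^M with ε_m > 0 for all m and ∑_{m=1}^M log₂(ζ_m/ε_m) ≤ b_tot) one has ∑_{m=1}^M p_m (ε^op_m)² ≤ ∑_{m=1}^M p_m ε_m². -/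
/-!
With `C = 2^{-b_tot} ∏ ζ_m √p_m`, the allocation is `ε^op_m = C^{1/M} / √p_m`, so every term
`p_m (ε^op_m)²` equals `C^{2/M}` and `∏ ε^op_m = 2^{-b_tot} ∏ ζ_m`, which is the budget with
equality. The budget constraint says exactly `∏ ε_m ≥ 2^{-b_tot} ∏ ζ_m`, hence
`∏ p_m ε_m² ≥ C²`, and AM–GM gives `∑ p_m ε_m² ≥ M (∏ p_m ε_m²)^{1/M} ≥ M C^{2/M}`.
-/

open Finset

namespace Real

theorem card_mul_le_sum_of_pow_card_le_prod {ι : Type*} {s : Finset ι} (hs : s.Nonempty)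
    {z : ι → ℝ} (hz : ∀ i ∈ s, 0 ≤ z i) {k : ℝ} (hk : 0 ≤ k) (h : k ^ #s ≤ ∏ i ∈ s, z i) :
    #s * k ≤ ∑ i ∈ s, z i := by
  have hn : (0 : ℝ) < #s := by exact_mod_cast hs.card_pos
  have amgm := geom_mean_le_arith_mean s 1 z (fun _ _ => zero_le_one) (by simpa using hn) hz
  simp only [Pi.one_apply, rpow_one, one_mul, sum_const, nsmul_eq_mul, mul_one] at amgm
  calc #s * k = #s * (k ^ #s) ^ (#s : ℝ)⁻¹ := by rw [pow_rpow_inv_natCast hk hs.card_pos.ne']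
    _ ≤ #s * (∏ i ∈ s, z i) ^ (#s : ℝ)⁻¹ := by gcongr
    _ ≤ ∑ i ∈ s, z i := by rwa [← le_div_iff₀' hn]

theorem sum_mul_sq_le_sum_mul_sq_of_prod_le {ι : Type*} {s : Finset ι} (hs : s.Nonempty)
    {p e ε : ι → ℝ} (hp : ∀ i ∈ s, 0 ≤ p i) (he : ∀ i ∈ s, 0 ≤ e i) {k : ℝ}
    (hk : ∀ i ∈ s, p i * e i ^ 2 = k) (h : ∏ i ∈ s, e i ≤ ∏ i ∈ s, ε i) :
    ∑ i ∈ s, p i * e i ^ 2 ≤ ∑ i ∈ s, p i * ε i ^ 2 := by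
  obtain ⟨i₀, hi₀⟩ := hs
  have hk0 : 0 ≤ k := hk i₀ hi₀ ▸ mul_nonneg (hp i₀ hi₀) (sq_nonneg _)
  rw [sum_congr rfl hk, sum_const, nsmul_eq_mul]
  refine card_mul_le_sum_of_pow_card_le_prod ⟨i₀, hi₀⟩
    (fun i hi => mul_nonneg (hp i hi) (sq_nonneg _)) hk0 ?_
  calc k ^ #s = (∏ i ∈ s, p i) * (∏ i ∈ s, e i) ^ 2 := by
        rw [← prod_const, ← prod_congr rfl hk, prod_mul_distrib, prod_pow]
    _ ≤ (∏ i ∈ s, p i) * (∏ i ∈ s, ε i) ^ 2 := by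
        gcongr
        · exact prod_nonneg hp
        · exact prod_nonneg he
    _ = ∏ i ∈ s, p i * ε i ^ 2 := by rw [prod_mul_distrib, prod_pow]

theorem sum_logb_div_le_iff {ι : Type*} {s : Finset ι} {a b : ℝ} (ha : 1 < a)
    {x y : ι → ℝ} (hx : ∀ i ∈ s, 0 < x i) (hy : ∀ i ∈ s, 0 < y i) :
    ∑ i ∈ s, logb a (x i / y i) ≤ b ↔ a ^ (-b) * ∏ i ∈ s, x i ≤ ∏ i ∈ s, y i := by
  rw [← logb_prod _ _ fun i hi => (div_pos (hx i hi) (hy i hi)).ne',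
    logb_le_iff_le_rpow ha (prod_pos fun i hi => div_pos (hx i hi) (hy i hi)),
    prod_div_distrib, div_le_iff₀ (prod_pos hy), rpow_neg (by positivity),
    inv_mul_le_iff₀ (by positivity)]

theorem rpow_inv_card_mul_prod_mul_sqrt_div {ι : Type*} [Fintype ι] [Nonempty ι] {c q : ℝ}
    {a p : ι → ℝ} (hc : 0 ≤ c) (ha : ∀ i, 0 ≤ a i) (hq : 0 < q) :
    (c * ∏ i, a i * √(p i / q)) ^ (Fintype.card ι : ℝ)⁻¹ =
      (c * ∏ i, a i * √(p i)) ^ (Fintype.card ι : ℝ)⁻¹ / √q := by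
  have hprod : ∏ i, a i * √(p i / q) = (∏ i, a i * √(p i)) / √q ^ Fintype.card ι := by
    simp only [sqrt_div' _ hq.le, mul_div_assoc', prod_div_distrib, prod_const, card_univ]
  have hnonneg : 0 ≤ c * ∏ i, a i * √(p i) :=
    mul_nonneg hc (prod_nonneg fun i _ => mul_nonneg (ha i) (sqrt_nonneg _))
  rw [hprod, mul_div_assoc', div_rpow hnonneg (by positivity),
    pow_rpow_inv_natCast (sqrt_nonneg q) Fintype.card_ne_zero]

end Real

/-- The closed-form allocation
`ε^op_m = (2^{-b_tot} ∏_{m'} ζ_{m'} √(p_{m'}/p_m))^{1/M}` is feasible for the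
pilot-distortion minimization problem, satisfies the ADC bit budget constraint
with equality, and achieves a pilot distortion no larger than that of any
feasible allocation. -/
theorem pilot_distortion_optimal_allocation
    (M : ℕ) (hM : 1 ≤ M)
    (p ζ : Fin M → ℝ) (hp : ∀ m, 0 < p m) (hζ : ∀ m, 0 < ζ m)
    (btot : ℝ)
    (εop : Fin M → ℝ)
    (hεop : ∀ m, εop m =
      ((2 : ℝ) ^ (-btot) * ∏ m', ζ m' * Real.sqrt (p m' / p m)) ^ ((M : ℝ)⁻¹)) :
    (∀ m, 0 < εop m) ∧
    (∑ m, Real.logb 2 (ζ m / εop m) = btot) ∧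
    (∀ ε : Fin M → ℝ, (∀ m, 0 < ε m) →
      (∑ m, Real.logb 2 (ζ m / ε m) ≤ btot) →
      ∑ m, p m * (εop m) ^ 2 ≤ ∑ m, p m * (ε m) ^ 2) := by
  have : NeZero M := ⟨by omega⟩
  set C := (2 : ℝ) ^ (-btot) * ∏ m, ζ m * √(p m) with hC
  have hCpos : 0 < C :=
    mul_pos (by positivity) (prod_pos fun m _ => mul_pos (hζ m) (Real.sqrt_pos.2 (hp m)))
  have hεop_eq : ∀ m, εop m = C ^ (M : ℝ)⁻¹ / √(p m) := fun m => by
    have h := Real.rpow_inv_card_mul_prod_mul_sqrt_div (c := 2 ^ (-btot)) (p := p) (by positivity)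
      (fun m => (hζ m).le) (hp m)
    rwa [Fintype.card_fin, ← hεop m] at h
  have hεop_pos : ∀ m, 0 < εop m := fun m => by
    rw [hεop_eq m]; exact div_pos (by positivity) (Real.sqrt_pos.2 (hp m))
  have hprod : ∏ m, εop m = 2 ^ (-btot) * ∏ m, ζ m := by
    have hsqrt : 0 < ∏ m, √(p m) := prod_pos fun m _ => Real.sqrt_pos.2 (hp m)
    rw [prod_congr rfl fun m _ => hεop_eq m, prod_div_distrib, prod_const, card_univ,
      Fintype.card_fin, Real.rpow_inv_natCast_pow hCpos.le (NeZero.ne M), div_eq_iff hsqrt.ne',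
      hC, prod_mul_distrib, mul_assoc]
  have hterm : ∀ m, p m * εop m ^ 2 = (C ^ (M : ℝ)⁻¹) ^ 2 := fun m => by
    rw [hεop_eq m, div_pow, Real.sq_sqrt (hp m).le, mul_div_cancel₀ _ (hp m).ne']
  refine ⟨hεop_pos, ?_, fun ε hε hbudget => ?_⟩
  · rw [← Real.logb_prod _ _ fun m _ => (div_pos (hζ m) (hεop_pos m)).ne', prod_div_distrib, hprod,
      div_mul_cancel_right₀ (prod_pos fun m _ => hζ m).ne', Real.rpow_neg zero_le_two, inv_inv,
      Real.logb_rpow two_pos (by norm_num)]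
  · exact Real.sum_mul_sq_le_sum_mul_sq_of_prod_le univ_nonempty (fun m _ => (hp m).le)
      (fun m _ => (hεop_pos m).le) (fun m _ => hterm m) (hprod.trans_le
        ((Real.sum_logb_div_le_iff one_lt_two (fun m _ => hζ m) fun m _ => hε m).1 hbudget))
end

section
/- Let ε^op ∈ ℝ^M be defined by ε^op_m = (2^{-b_tot} ∏_{m'=1}^M ζ_{m'} √(p_{m'}/p_m))^{1/M}. Then ε^op is the unique minimizer of the pilot-distortion minimization problem: for every feasible ε with ε ≠ ε^op one has ∑_{m=1}^M p_m (ε^op_m)² < ∑_{m=1}^M p_m ε_m². -/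
/-! Put `x_m = p_m ε_m²`. The quantity `log (p_m (ε^op_m)²)` does not depend on `m`; call it
`λ`, and `K = e^λ`. The bit budget is equivalent to `∑ log x_m ≥ M λ`. Since `log` lies below its
tangent at `K`, `K (log x - log K) ≤ x - K`, with equality only at `x = K`; summing over `m` gives
`∑ x_m > M K = ∑ p_m (ε^op_m)²` unless every `x_m = K`, that is, unless `ε = ε^op`. -/

open Finset Real

theorem card_mul_lt_sum_of_card_mul_log_le_sum_log {ι : Type*} {s : Finset ι} {K : ℝ}
    (hK : 0 < K) {x : ι → ℝ} (hx : ∀ i ∈ s, 0 < x i)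
    (hlog : #s * log K ≤ ∑ i ∈ s, log (x i)) (hne : ∃ i ∈ s, x i ≠ K) :
    #s * K < ∑ i ∈ s, x i := by
  have tangent_le : ∀ i ∈ s, K * (log (x i) - log K) ≤ x i - K := fun i hi =>
    calc K * (log (x i) - log K) = K * log (x i / K) := by rw [log_div (hx i hi).ne' hK.ne']
      _ ≤ K * (x i / K - 1) := by gcongr; exact log_le_sub_one_of_pos (div_pos (hx i hi) hK)
      _ = x i - K := by field_simp
  have tangent_lt : ∃ i ∈ s, K * (log (x i) - log K) < x i - K := by
    obtain ⟨i, hi, hxi⟩ := hne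
    refine ⟨i, hi, ?_⟩
    calc K * (log (x i) - log K) = K * log (x i / K) := by rw [log_div (hx i hi).ne' hK.ne']
      _ < K * (x i / K - 1) := by
        gcongr
        exact log_lt_sub_one_of_pos (div_pos (hx i hi) hK)
          (by rwa [ne_eq, div_eq_one_iff_eq hK.ne'])
      _ = x i - K := by field_simp
  have := sum_lt_sum tangent_le tangent_lt
  rw [← mul_sum, sum_sub_distrib, sum_sub_distrib, sum_const, sum_const, nsmul_eq_mul,
    nsmul_eq_mul] at this
  have := mul_nonneg hK.le (sub_nonneg.2 hlog)
  linarith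

noncomputable def optimalAllocation {M : ℕ} (p ζ : Fin M → ℝ) (btot : ℝ) (m : Fin M) : ℝ :=
  ((2 : ℝ) ^ (-btot) * ∏ m', ζ m' * Real.sqrt (p m' / p m)) ^ ((M : ℝ)⁻¹)

namespace optimalAllocation

variable {M : ℕ} {p ζ : Fin M → ℝ} (btot : ℝ)

theorem pos (hp : ∀ m, 0 < p m) (hζ : ∀ m, 0 < ζ m) (m : Fin M) :
    0 < optimalAllocation p ζ btot m :=
  rpow_pos_of_pos (mul_pos (rpow_pos_of_pos two_pos _)
    (prod_pos fun m' _ => mul_pos (hζ m') (sqrt_pos.2 (div_pos (hp m') (hp m))))) _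

theorem log_mul_sq (hM : M ≠ 0) (hp : ∀ m, 0 < p m) (hζ : ∀ m, 0 < ζ m) (m : Fin M) :
    log (p m * optimalAllocation p ζ btot m ^ 2) =
      (2 * (∑ m', log (ζ m') - btot * log 2) + ∑ m', log (p m')) / M := by
  have hfactor_pos : ∀ m', 0 < ζ m' * √(p m' / p m) :=
    fun m' => mul_pos (hζ m') (sqrt_pos.2 (div_pos (hp m') (hp m)))
  have hlog_factor : ∀ m',
      log (ζ m' * √(p m' / p m)) = log (ζ m') + (log (p m') - log (p m)) / 2 := fun m' => by
    rw [log_mul (hζ m').ne' (sqrt_pos.2 (div_pos (hp m') (hp m))).ne',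
      log_sqrt (div_pos (hp m') (hp m)).le, log_div (hp m').ne' (hp m).ne']
  rw [log_mul (hp m).ne' (pow_pos (pos btot hp hζ m) 2).ne', log_pow, optimalAllocation,
    log_rpow (mul_pos (rpow_pos_of_pos two_pos _) (prod_pos fun m' _ => hfactor_pos m')),
    log_mul (rpow_pos_of_pos two_pos _).ne' (prod_pos fun m' _ => hfactor_pos m').ne',
    log_rpow two_pos, log_prod fun m' _ => (hfactor_pos m').ne']
  simp only [hlog_factor, sum_add_distrib, ← sum_div, sum_sub_distrib, sum_const, card_univ,
    Fintype.card_fin, nsmul_eq_mul]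
  field_simp
  ring

end optimalAllocation

theorem le_sum_log_mul_sq_of_sum_logb_div_le {M : ℕ} {p ζ ε : Fin M → ℝ} {btot : ℝ}
    (hp : ∀ m, 0 < p m) (hζ : ∀ m, 0 < ζ m) (hε : ∀ m, 0 < ε m)
    (hbudget : ∑ m, logb 2 (ζ m / ε m) ≤ btot) :
    2 * (∑ m, log (ζ m) - btot * log 2) + ∑ m, log (p m) ≤ ∑ m, log (p m * ε m ^ 2) := by
  simp only [logb, log_div (hζ _).ne' (hε _).ne', ← sum_div,
    div_le_iff₀ (log_pos one_lt_two), sum_sub_distrib] at hbudget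
  simp only [log_mul (hp _).ne' (pow_pos (hε _) 2).ne', log_pow, sum_add_distrib, ← mul_sum]
  push_cast
  linarith

theorem pilot_distortion_unique_minimizer_general
    (M : ℕ)
    (p ζ : Fin M → ℝ) (hp : ∀ m, 0 < p m) (hζ : ∀ m, 0 < ζ m)
    (btot : ℝ)
    (εop : Fin M → ℝ)
    (hεop : ∀ m, εop m =
      ((2 : ℝ) ^ (-btot) * ∏ m', ζ m' * Real.sqrt (p m' / p m)) ^ ((M : ℝ)⁻¹)) :
    ∀ ε : Fin M → ℝ, (∀ m, 0 < ε m) →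
      (∑ m, Real.logb 2 (ζ m / ε m) ≤ btot) →
      ε ≠ εop →
      ∑ m, p m * (εop m) ^ 2 < ∑ m, p m * (ε m) ^ 2 := by
  intro ε hε hbudget hne
  obtain ⟨m₀, hm₀⟩ := Function.ne_iff.mp hne
  have hM : M ≠ 0 := m₀.pos.ne'
  obtain rfl : εop = optimalAllocation p ζ btot := funext hεop
  set level := (2 * (∑ m, log (ζ m) - btot * log 2) + ∑ m, log (p m)) / M
  have hopt : ∀ m, p m * optimalAllocation p ζ btot m ^ 2 = exp level := fun m => by
    rw [← exp_log (mul_pos (hp m) (pow_pos (optimalAllocation.pos btot hp hζ m) 2)),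
      optimalAllocation.log_mul_sq btot hM hp hζ m]
  have hlevel :
      (#(univ : Finset (Fin M)) : ℝ) * log (exp level) ≤ ∑ m, log (p m * ε m ^ 2) := by
    rw [log_exp, card_univ, Fintype.card_fin, mul_div_cancel₀ _ (Nat.cast_ne_zero.2 hM)]
    exact le_sum_log_mul_sq_of_sum_logb_div_le hp hζ hε hbudget
  have hm₀_ne : p m₀ * ε m₀ ^ 2 ≠ exp level := fun h => hm₀ <| by
    rw [← hopt m₀] at h
    exact (sq_eq_sq₀ (hε m₀).le (optimalAllocation.pos btot hp hζ m₀).le).1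
      (mul_left_cancel₀ (hp m₀).ne' h)
  simpa only [hopt, sum_const, card_univ, Fintype.card_fin, nsmul_eq_mul] using
    card_mul_lt_sum_of_card_mul_log_le_sum_log (exp_pos level)
      (fun m _ => mul_pos (hp m) (pow_pos (hε m) 2)) hlevel ⟨m₀, mem_univ m₀, hm₀_ne⟩

/-- The closed-form allocation
`ε^op_m = (2^{-b_tot} ∏_{m'} ζ_{m'} √(p_{m'}/p_m))^{1/M}` is the *unique*
minimizer of the pilot-distortion minimization problem: every feasible
allocation `ε ≠ ε^op` incurs strictly larger pilot distortion. -/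
theorem pilot_distortion_unique_minimizer
    (M : ℕ) (hM : 1 ≤ M)
    (p ζ : Fin M → ℝ) (hp : ∀ m, 0 < p m) (hζ : ∀ m, 0 < ζ m)
    (btot : ℝ)
    (εop : Fin M → ℝ)
    (hεop : ∀ m, εop m =
      ((2 : ℝ) ^ (-btot) * ∏ m', ζ m' * Real.sqrt (p m' / p m)) ^ ((M : ℝ)⁻¹)) :
    ∀ ε : Fin M → ℝ, (∀ m, 0 < ε m) →
      (∑ m, Real.logb 2 (ζ m / ε m) ≤ btot) →
      ε ≠ εop →
      ∑ m, p m * (εop m) ^ 2 < ∑ m, p m * (ε m) ^ 2 :=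
  pilot_distortion_unique_minimizer_general M p ζ hp hζ btot εop hεop
end

section
/- Let R ∈ ℂ^{M×M} be Hermitian positive semidefinite with positive-semidefinite square root R^{1/2}, set h = R^{1/2} g, and let A ∈ ℂ^{M×M} be arbitrary. Let a, b ∈ ℝ^M, D_a = diag(a), D_b = diag(b), D_h = diag(|h_1|²,…,|h_M|²), and D_R = diag([R]_{11},…,[R]_{MM}). Then E[tr(D_a D_h A D_b D_h A^H)] = tr(D_a D_R A D_b D_R A^H) + ∑_{m=1}^M ∑_{m'=1}^M a_m b_{m'} |[A]_{m m'}|² |[R]_{m m'}|². -/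
/-!
Expanding `h = R^{1/2} g`, each `|h_m|² |h_{m'}|²` is a quartic form in `g`, so everything reduces
to the moments `E[g_k ḡ_l g_p ḡ_q]`. By independence these factor over the coordinates, and the
moment conditions turn the product into the Wick pairing `δ_kl δ_pq + δ_kq δ_pl`, exactly as for
circular Gaussians. Contracting against the coefficients gives
`E[|h_m|² |h_{m'}|²] = R_mm R_{m'm'} + |R_{mm'}|²`, and the trace of the diagonal sandwich is linear
in these quantities.
-/

open MeasureTheory ProbabilityTheory Matrix Finset ComplexConjugate
open scoped ENNReal ComplexOrder

theorem Complex.ofReal_norm_sq_eq_mul_conj (z : ℂ) : ((‖z‖ ^ 2 : ℝ) : ℂ) = z * conj z := by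
  rw [Complex.mul_conj']
  push_cast
  rfl

theorem Matrix.trace_diagonal_mul_diagonal_mul_mul_diagonal_mul_diagonal_mul_conjTranspose
    {n α : Type*} [Fintype n] [DecidableEq n] [CommSemiring α] [StarRing α]
    (d₁ d₂ e₁ e₂ : n → α) (A : Matrix n n α) :
    (diagonal d₁ * diagonal d₂ * A * diagonal e₁ * diagonal e₂ * Aᴴ).trace =
      ∑ i, ∑ j, d₁ i * e₁ j * (A i j * star (A i j)) * (d₂ i * e₂ j) := by
  rw [diagonal_mul_diagonal, Matrix.mul_assoc _ (diagonal e₁), diagonal_mul_diagonal]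
  refine sum_congr rfl fun i _ => ?_
  rw [diag, mul_apply]
  refine sum_congr rfl fun j _ => ?_
  rw [mul_diagonal, diagonal_mul, conjTranspose_apply]
  ring

theorem sum_mul_wick_pairings {ι R : Type*} [Fintype ι] [DecidableEq ι] [CommSemiring R]
    (a b c d : ι → R) :
    ∑ k, ∑ p, ∑ l, ∑ q, a k * b l * (c p * d q) *
        ((if k = l then 1 else 0) * (if p = q then 1 else 0) +
          (if k = q then 1 else 0) * (if p = l then 1 else 0)) =
      (a ⬝ᵥ b) * (c ⬝ᵥ d) + (a ⬝ᵥ d) * (c ⬝ᵥ b) := by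
  simp only [dotProduct, sum_mul_sum, ← sum_add_distrib]
  refine sum_congr rfl fun k _ => sum_congr rfl fun p _ => ?_
  simp only [mul_add, mul_ite, mul_one, mul_zero, sum_add_distrib, sum_ite_eq,
    mem_univ, if_true, sum_ite_irrel, sum_const_zero]
  ring

theorem prod_eq_wick_pairings {ι : Type*} [Fintype ι] [DecidableEq ι] (m : ι → ℕ → ℕ → ℂ)
    (h00 : ∀ i, m i 0 0 = 1) (h10 : ∀ i, m i 1 0 = 0) (h01 : ∀ i, m i 0 1 = 0)
    (h11 : ∀ i, m i 1 1 = 1) (h20 : ∀ i, m i 2 0 = 0) (h02 : ∀ i, m i 0 2 = 0)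
    (h22 : ∀ i, m i 2 2 = 2) (k l p q : ι) :
    ∏ i, m i ((if i = k then 1 else 0) + (if i = p then 1 else 0))
        ((if i = l then 1 else 0) + (if i = q then 1 else 0)) =
      (if k = l then 1 else 0) * (if p = q then 1 else 0) +
        (if k = q then 1 else 0) * (if p = l then 1 else 0) := by
  -- Off `{k, l, p, q}` every factor is `m i 0 0 = 1`; the unprescribed moments `m i 2 1` and
  -- `m i 1 2` only ever occur next to a vanishing factor.
  rw [← prod_subset (subset_univ {k, l, p, q}) fun i _ hi => by
    simp only [mem_insert, mem_singleton, not_or] at hi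
    simp [hi.1, hi.2.1, hi.2.2.1, hi.2.2.2, h00]]
  by_cases hkl : k = l <;> by_cases hkp : k = p <;> by_cases hkq : k = q <;>
    by_cases hlp : l = p <;> by_cases hlq : l = q <;> by_cases hpq : p = q <;>
    simp_all [prod_insert, @eq_comm ι, one_add_one_eq_two]

section QuarticMoments

variable {Ω ι : Type*} [MeasurableSpace Ω] {μ : Measure Ω}

theorem MeasureTheory.MemLp.integrable_mul_mul_mul {𝕜 : Type*} [NormedRing 𝕜]
    {f₁ f₂ f₃ f₄ : Ω → 𝕜}
    (h₁ : MemLp f₁ 4 μ) (h₂ : MemLp f₂ 4 μ) (h₃ : MemLp f₃ 4 μ) (h₄ : MemLp f₄ 4 μ) :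
    Integrable (fun ω => f₁ ω * f₂ ω * (f₃ ω * f₄ ω)) μ :=
  have : ENNReal.HolderTriple 4 4 2 := ⟨by
    rw [← ENNReal.add_halves (2⁻¹ : ℝ≥0∞), ENNReal.div_eq_inv_mul, ← ENNReal.mul_inv] <;>
      norm_num⟩
  (h₂.mul' h₁ (r := 2)).integrable_mul (h₄.mul' h₃ (r := 2))

theorem integral_mul_conj_mul_mul_conj [Fintype ι] [DecidableEq ι] [IsProbabilityMeasure μ]
    {g : ι → Ω → ℂ} (hindep : iIndepFun g μ) (hg : ∀ i, AEMeasurable (g i) μ)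
    (hmean : ∀ i, ∫ ω, g i ω ∂μ = 0) (hsq : ∀ i, ∫ ω, g i ω ^ 2 ∂μ = 0)
    (habs2 : ∀ i, ∫ ω, ‖g i ω‖ ^ 2 ∂μ = 1) (habs4 : ∀ i, ∫ ω, ‖g i ω‖ ^ 4 ∂μ = 2)
    (k l p q : ι) :
    ∫ ω, g k ω * conj (g l ω) * (g p ω * conj (g q ω)) ∂μ =
      (if k = l then 1 else 0) * (if p = q then 1 else 0) +
        (if k = q then 1 else 0) * (if p = l then 1 else 0) := by
  set a : ι → ℕ := fun i => (if i = k then 1 else 0) + (if i = p then 1 else 0) with ha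
  set b : ι → ℕ := fun i => (if i = l then 1 else 0) + (if i = q then 1 else 0) with hb
  have hprod : ∀ ω, g k ω * conj (g l ω) * (g p ω * conj (g q ω)) =
      ∏ i, g i ω ^ a i * conj (g i ω) ^ b i := fun ω => by
    simp only [ha, hb, pow_add, pow_ite, pow_one, pow_zero, prod_mul_distrib, prod_ite_eq',
      mem_univ, if_true]
    ring
  rw [integral_congr_ae (ae_of_all _ hprod),
    hindep.integral_fun_prod_comp (f := fun i z => z ^ a i * conj z ^ b i) hg
      fun i => (by fun_prop : Continuous _).aestronglyMeasurable]
  refine prod_eq_wick_pairings (fun i a b => ∫ ω, g i ω ^ a * conj (g i ω) ^ b ∂μ)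
    (fun i => by simp) (fun i => by simp [hmean]) (fun i => by simp [integral_conj, hmean])
    (fun i => ?_) (fun i => by simp [hsq]) (fun i => ?_) (fun i => ?_) k l p q
  · simp only [pow_one, ← Complex.ofReal_norm_sq_eq_mul_conj]
    rw [integral_complex_ofReal, habs2, Complex.ofReal_one]
  · simp only [pow_zero, one_mul, ← map_pow, integral_conj, hsq, map_zero]
  · have hnorm4 : ∀ z : ℂ, z ^ 2 * conj z ^ 2 = ((‖z‖ ^ 4 : ℝ) : ℂ) := fun z => by
      rw [← mul_pow, ← Complex.ofReal_norm_sq_eq_mul_conj, ← Complex.ofReal_pow, ← pow_mul]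
    simp only [hnorm4]
    rw [integral_complex_ofReal, habs4]
    norm_num

theorem MeasureTheory.integral_sum_sum_const_mul {κ 𝕜 : Type*} [Fintype κ] [RCLike 𝕜]
    (c : κ → κ → 𝕜) {F : κ → κ → Ω → 𝕜} (hF : ∀ i j, Integrable (F i j) μ) :
    ∫ ω, ∑ i, ∑ j, c i j * F i j ω ∂μ = ∑ i, ∑ j, c i j * ∫ ω, F i j ω ∂μ := by
  rw [integral_finsetSum _ fun i _ => integrable_finsetSum _ fun j _ => (hF i j).const_mul _]
  refine sum_congr rfl fun i _ => ?_
  rw [integral_finsetSum _ fun j _ => (hF i j).const_mul _]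
  exact sum_congr rfl fun j _ => integral_const_mul _ _

theorem MeasureTheory.memLp_dotProduct [Fintype ι] {g : ι → Ω → ℂ} {p : ℝ≥0∞}
    (hg : ∀ i, MemLp (g i) p μ) (u : ι → ℂ) : MemLp (fun ω => u ⬝ᵥ (g · ω)) p μ :=
  memLp_finsetSum _ fun i _ => (hg i).const_mul (u i)

theorem integrable_sq_norm_dotProduct_mul_sq_norm_dotProduct [Fintype ι] {g : ι → Ω → ℂ}
    (hL4 : ∀ i, MemLp (g i) 4 μ) (u v : ι → ℂ) :
    Integrable (fun ω => ((‖u ⬝ᵥ (g · ω)‖ ^ 2 : ℝ) : ℂ) * ((‖v ⬝ᵥ (g · ω)‖ ^ 2 : ℝ) : ℂ)) μ := by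
  simp only [Complex.ofReal_norm_sq_eq_mul_conj]
  exact (memLp_dotProduct hL4 u).integrable_mul_mul_mul (memLp_dotProduct hL4 u).star
    (memLp_dotProduct hL4 v) (memLp_dotProduct hL4 v).star

theorem integral_sq_norm_dotProduct_mul_sq_norm_dotProduct [Fintype ι] [DecidableEq ι]
    [IsProbabilityMeasure μ] {g : ι → Ω → ℂ} (hindep : iIndepFun g μ)
    (hL4 : ∀ i, MemLp (g i) 4 μ)
    (hmean : ∀ i, ∫ ω, g i ω ∂μ = 0) (hsq : ∀ i, ∫ ω, g i ω ^ 2 ∂μ = 0)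
    (habs2 : ∀ i, ∫ ω, ‖g i ω‖ ^ 2 ∂μ = 1) (habs4 : ∀ i, ∫ ω, ‖g i ω‖ ^ 4 ∂μ = 2)
    (u v : ι → ℂ) :
    ∫ ω, ((‖u ⬝ᵥ (g · ω)‖ ^ 2 : ℝ) : ℂ) * ((‖v ⬝ᵥ (g · ω)‖ ^ 2 : ℝ) : ℂ) ∂μ =
      (u ⬝ᵥ star u) * (v ⬝ᵥ star v) + ((‖u ⬝ᵥ star v‖ ^ 2 : ℝ) : ℂ) := by
  let c : ι × ι × ι × ι → ℂ := fun x => u x.1 * conj (u x.2.2.1) * (v x.2.1 * conj (v x.2.2.2))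
  let G : ι × ι × ι × ι → Ω → ℂ := fun x ω =>
    g x.1 ω * conj (g x.2.2.1 ω) * (g x.2.1 ω * conj (g x.2.2.2 ω))
  have hexpand : ∀ ω, ((‖u ⬝ᵥ (g · ω)‖ ^ 2 : ℝ) : ℂ) * ((‖v ⬝ᵥ (g · ω)‖ ^ 2 : ℝ) : ℂ) =
      ∑ x, c x * G x ω := fun ω => by
    simp only [Complex.ofReal_norm_sq_eq_mul_conj, dotProduct, map_sum, map_mul, sum_mul_sum,
      Fintype.sum_prod_type, c, G]
    exact sum_congr rfl fun k _ => sum_congr rfl fun p _ =>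
      sum_congr rfl fun l _ => sum_congr rfl fun q _ => by ring
  have hG : ∀ x, Integrable (G x) μ := fun x =>
    (hL4 _).integrable_mul_mul_mul (hL4 _).star (hL4 _) (hL4 _).star
  have hgm : ∀ i, AEMeasurable (g i) μ := fun i => (hL4 i).aestronglyMeasurable.aemeasurable
  rw [integral_congr_ae (ae_of_all _ hexpand), integral_finsetSum _ fun x _ => (hG x).const_mul _]
  simp only [integral_const_mul, G,
    integral_mul_conj_mul_mul_conj hindep hgm hmean hsq habs2 habs4, Fintype.sum_prod_type, c]
  rw [sum_mul_wick_pairings, Complex.ofReal_norm_sq_eq_mul_conj, starRingEnd_apply,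
    ← dotProduct_star]
  rfl

end QuarticMoments

theorem cn_double_diag_quartic_identity_general
    {Ω : Type*} [MeasurableSpace Ω] (μ : Measure Ω) [IsProbabilityMeasure μ]
    (M : ℕ) (g : Fin M → Ω → ℂ)
    (hindep : iIndepFun g μ)
    (hL4 : ∀ m, MemLp (g m) 4 μ)
    (hmean : ∀ m, ∫ ω, g m ω ∂μ = 0)
    (hsq : ∀ m, ∫ ω, (g m ω) ^ 2 ∂μ = 0)
    (habs2 : ∀ m, ∫ ω, ‖g m ω‖ ^ 2 ∂μ = 1)
    (habs4 : ∀ m, ∫ ω, ‖g m ω‖ ^ 4 ∂μ = 2)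
    (R Rsqrt : Matrix (Fin M) (Fin M) ℂ)
    (hRsqrt : Rsqrt.PosSemidef) (hRsq : Rsqrt * Rsqrt = R)
    (A : Matrix (Fin M) (Fin M) ℂ)
    (a b : Fin M → ℝ)
    (h : Ω → Fin M → ℂ) (hh : ∀ ω, h ω = Rsqrt.mulVec (fun m => g m ω))
    (Da Db : Matrix (Fin M) (Fin M) ℂ)
    (hDa : Da = Matrix.diagonal (fun m => ((a m : ℝ) : ℂ)))
    (hDb : Db = Matrix.diagonal (fun m => ((b m : ℝ) : ℂ)))
    (Dh : Ω → Matrix (Fin M) (Fin M) ℂ)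
    (hDh : ∀ ω, Dh ω = Matrix.diagonal (fun m => ((‖h ω m‖ ^ 2 : ℝ) : ℂ)))
    (DR : Matrix (Fin M) (Fin M) ℂ)
    (hDR : DR = Matrix.diagonal (fun m => R m m)) :
    ∫ ω, (Da * Dh ω * A * Db * Dh ω * Aᴴ).trace ∂μ =
      (Da * DR * A * Db * DR * Aᴴ).trace +
        ((∑ m, ∑ m', a m * b m' * ‖A m m'‖ ^ 2 *
          ‖R m m'‖ ^ 2 : ℝ) : ℂ) := by
  have hRentry : ∀ i j, Rsqrt i ⬝ᵥ star (Rsqrt j) = R i j := fun i j => by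
    rw [← hRsq, mul_apply']
    exact congrArg _ (funext fun k => hRsqrt.isHermitian.apply k j)
  have hh_apply : ∀ ω m, h ω m = Rsqrt m ⬝ᵥ (g · ω) := fun ω m => by rw [hh]; rfl
  have hint : ∀ m m', Integrable
      (fun ω => ((‖h ω m‖ ^ 2 : ℝ) : ℂ) * ((‖h ω m'‖ ^ 2 : ℝ) : ℂ)) μ := fun m m' => by
    simpa only [hh_apply] using
      integrable_sq_norm_dotProduct_mul_sq_norm_dotProduct hL4 (Rsqrt m) (Rsqrt m')
  have hmoment : ∀ m m', ∫ ω, ((‖h ω m‖ ^ 2 : ℝ) : ℂ) * ((‖h ω m'‖ ^ 2 : ℝ) : ℂ) ∂μ =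
      R m m * R m' m' + ((‖R m m'‖ ^ 2 : ℝ) : ℂ) := fun m m' => by
    simp only [hh_apply, hRentry,
      integral_sq_norm_dotProduct_mul_sq_norm_dotProduct hindep hL4 hmean hsq habs2 habs4]
  subst hDa hDb hDR
  simp only [hDh, trace_diagonal_mul_diagonal_mul_mul_diagonal_mul_diagonal_mul_conjTranspose]
  have hA : ∀ m m', A m m' * star (A m m') = ((‖A m m'‖ ^ 2 : ℝ) : ℂ) := fun m m' =>
    (Complex.ofReal_norm_sq_eq_mul_conj _).symm
  rw [integral_sum_sum_const_mul _ hint]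
  simp only [hmoment, hA]
  push_cast
  simp only [← sum_add_distrib, mul_add]

/-- Let `h = R^{1/2} g` with `R` Hermitian PSD and `g` a
vector of mutually independent complex random variables with the `CN(0,1)`
moment conditions. For any matrix `A`, real vectors `a, b`, and diagonal
matrices `D_a = diag(a)`, `D_b = diag(b)`, `D_h = diag(|h_m|²)`,
`D_R = diag([R]_{mm})`:
`E[tr(D_a D_h A D_b D_h Aᴴ)]
  = tr(D_a D_R A D_b D_R Aᴴ) + ∑_m ∑_{m'} a_m b_{m'} |A_{mm'}|² |R_{mm'}|²`. -/
theorem cn_double_diag_quartic_identity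
    {Ω : Type*} [MeasurableSpace Ω] (μ : Measure Ω) [IsProbabilityMeasure μ]
    (M : ℕ) (g : Fin M → Ω → ℂ)
    (hmeas : ∀ m, Measurable (g m))
    (hindep : iIndepFun g μ)
    (hL4 : ∀ m, MemLp (g m) 4 μ)
    (hmean : ∀ m, ∫ ω, g m ω ∂μ = 0)
    (hsq : ∀ m, ∫ ω, (g m ω) ^ 2 ∂μ = 0)
    (habs2 : ∀ m, ∫ ω, ‖g m ω‖ ^ 2 ∂μ = 1)
    (habs4 : ∀ m, ∫ ω, ‖g m ω‖ ^ 4 ∂μ = 2)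
    (R Rsqrt : Matrix (Fin M) (Fin M) ℂ)
    (hR : R.PosSemidef) (hRsqrt : Rsqrt.PosSemidef) (hRsq : Rsqrt * Rsqrt = R)
    (A : Matrix (Fin M) (Fin M) ℂ)
    (a b : Fin M → ℝ)
    (h : Ω → Fin M → ℂ) (hh : ∀ ω, h ω = Rsqrt.mulVec (fun m => g m ω))
    (Da Db : Matrix (Fin M) (Fin M) ℂ)
    (hDa : Da = Matrix.diagonal (fun m => ((a m : ℝ) : ℂ)))
    (hDb : Db = Matrix.diagonal (fun m => ((b m : ℝ) : ℂ)))
    (Dh : Ω → Matrix (Fin M) (Fin M) ℂ)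
    (hDh : ∀ ω, Dh ω = Matrix.diagonal (fun m => ((‖h ω m‖ ^ 2 : ℝ) : ℂ)))
    (DR : Matrix (Fin M) (Fin M) ℂ)
    (hDR : DR = Matrix.diagonal (fun m => R m m)) :
    ∫ ω, (Da * Dh ω * A * Db * Dh ω * Aᴴ).trace ∂μ =
      (Da * DR * A * Db * DR * Aᴴ).trace +
        ((∑ m, ∑ m', a m * b m' * ‖A m m'‖ ^ 2 *
          ‖R m m'‖ ^ 2 : ℝ) : ℂ) :=
  cn_double_diag_quartic_identity_general μ M g hindep hL4 hmean hsq habs2 habs4 R Rsqrt hRsqrt hRsq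
    A a b h hh Da Db hDa hDb Dh hDh DR hDR
end

section
/- Let R ∈ ℂ^{M×M} be Hermitian positive semidefinite with positive-semidefinite square root R^{1/2}, set h = R^{1/2} g, and let B ∈ ℂ^{M×M} be arbitrary. Then the second moment of the quadratic form h^H B h satisfies E[|h^H B h|²] = |tr(B R)|² + tr(R B R B^H). -/
/-!
Writing `h = R^{1/2} g`, the quadratic form is `gᴴ A g` with `A = R^{1/2} B R^{1/2}`, so
`|hᴴ B h|²` expands into `∑ A i j * conj (A k l) * conj (g i) * g j * g k * conj (g l)`.
By independence each fourth moment factorises over the distinct indices, and the moment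
conditions leave exactly the pairings `δ i j * δ k l + δ i k * δ j l` (on the diagonal
`E|g|⁴ = 2` counts both). Contracting `A ⊗ conj A` against these pairings gives
`|tr A|² + tr (A Aᴴ)`, which by cyclicity of the trace is `|tr (B R)|² + tr (R B R Bᴴ)`.
-/

open MeasureTheory ProbabilityTheory Matrix Finset ComplexConjugate
open scoped ComplexOrder ENNReal

namespace Matrix

variable {m n R : Type*} [Fintype m] [Fintype n]

theorem dotProduct_mulVec_eq_sum [NonUnitalSemiring R] (x : m → R) (A : Matrix m n R)
    (y : n → R) : x ⬝ᵥ A *ᵥ y = ∑ i, ∑ j, x i * A i j * y j := by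
  simp only [dotProduct, mulVec, mul_sum, mul_assoc]

theorem star_mulVec_dotProduct_mulVec_mulVec [CommSemiring R] [StarRing R] (S : Matrix m n R)
    (B : Matrix m m R) (x : n → R) :
    star (S *ᵥ x) ⬝ᵥ B *ᵥ (S *ᵥ x) = star x ⬝ᵥ (Sᴴ * B * S) *ᵥ x := by
  rw [star_mulVec, mulVec_mulVec, dotProduct_mulVec, vecMul_vecMul, ← dotProduct_mulVec,
    Matrix.mul_assoc]

theorem trace_conjTranspose_mul_mul_mul_conjTranspose [CommSemiring R] [StarRing R]
    (S B : Matrix n n R) :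
    ((Sᴴ * B * S) * (Sᴴ * B * S)ᴴ).trace = ((S * Sᴴ) * B * (S * Sᴴ) * Bᴴ).trace := by
  simp only [conjTranspose_mul, conjTranspose_conjTranspose]
  rw [Matrix.mul_assoc, Matrix.mul_assoc, Matrix.mul_assoc, trace_mul_comm Sᴴ,
    Matrix.mul_assoc (S * Sᴴ), trace_mul_comm (S * Sᴴ)]
  simp only [Matrix.mul_assoc]

theorem ofReal_norm_sq_star_dotProduct_mulVec (A : Matrix n n ℂ) (x : n → ℂ) :
    ((‖star x ⬝ᵥ A *ᵥ x‖ ^ 2 : ℝ) : ℂ) =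
      ∑ i, ∑ j, ∑ k, ∑ l, A i j * conj (A k l) * (conj (x i) * x j * x k * conj (x l)) := by
  rw [Complex.ofReal_pow, ← Complex.mul_conj', dotProduct_mulVec_eq_sum]
  simp only [sum_mul]
  simp only [map_sum, map_mul, Pi.star_apply, RCLike.star_def, Complex.conj_conj, mul_sum]
  refine sum_congr rfl fun i _ => sum_congr rfl fun j _ =>
    sum_congr rfl fun k _ => sum_congr rfl fun l _ => ?_
  ring

theorem sum_mul_conj_mul_pairings [DecidableEq n] (A : Matrix n n ℂ) :
    ∑ i, ∑ j, ∑ k, ∑ l, A i j * conj (A k l) *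
        ((if i = j then 1 else 0) * (if k = l then 1 else 0) +
          (if i = k then 1 else 0) * (if j = l then 1 else 0)) =
      ((‖A.trace‖ ^ 2 : ℝ) : ℂ) + (A * Aᴴ).trace := by
  rw [Complex.ofReal_pow, ← Complex.mul_conj']
  simp only [mul_ite, mul_one, mul_zero, mul_add, sum_add_distrib, sum_ite_eq, mem_univ,
    ↓reduceIte, sum_ite_irrel, sum_const_zero, trace, diag_apply, map_sum, mul_sum, sum_mul,
    mul_apply, conjTranspose_apply, RCLike.star_def, add_left_inj]
  rw [sum_comm]

end Matrix

section FourthMoment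

variable {ι Ω : Type*} {_ : MeasurableSpace Ω} {μ : Measure Ω}

/-- `c m a b` plays the role of `E[conj (g m) ^ a * g m ^ b]`; the exponents are the
multiplicities of `m` among `(i, l)` and among `(j, k)`. -/
theorem prod_mixed_moments_eq_pairings [Fintype ι] [DecidableEq ι] (c : ι → ℕ → ℕ → ℂ)
    (h00 : ∀ m, c m 0 0 = 1) (h10 : ∀ m, c m 1 0 = 0) (h01 : ∀ m, c m 0 1 = 0)
    (h20 : ∀ m, c m 2 0 = 0) (h02 : ∀ m, c m 0 2 = 0) (h11 : ∀ m, c m 1 1 = 1)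
    (h22 : ∀ m, c m 2 2 = 2) (i j k l : ι) :
    ∏ m, c m ((if i = m then 1 else 0) + (if l = m then 1 else 0))
        ((if j = m then 1 else 0) + (if k = m then 1 else 0)) =
      (if i = j then 1 else 0) * (if k = l then 1 else 0) +
        (if i = k then 1 else 0) * (if j = l then 1 else 0) := by
  rw [← prod_subset (subset_univ {i, j, k, l}) fun m _ hm => by
    simp only [mem_insert, mem_singleton, not_or] at hm
    simp [Ne.symm hm.1, Ne.symm hm.2.1, Ne.symm hm.2.2.1, Ne.symm hm.2.2.2, h00]]
  by_cases hij : i = j <;> by_cases hik : i = k <;> by_cases hil : i = l <;>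
    by_cases hjk : j = k <;> by_cases hjl : j = l <;> by_cases hkl : k = l <;>
    simp_all [prod_insert, Ne.symm, one_add_one_eq_two]

theorem conj_mul_mul_mul_conj_eq_prod [Fintype ι] [DecidableEq ι] (x : ι → ℂ) (i j k l : ι) :
    conj (x i) * x j * x k * conj (x l) =
      ∏ m, conj (x m) ^ ((if i = m then 1 else 0) + (if l = m then 1 else 0)) *
        x m ^ ((if j = m then 1 else 0) + (if k = m then 1 else 0)) := by
  simp only [pow_add, prod_mul_distrib, prod_pow_boole, mem_univ, if_true]
  ring

/-- The complex Isserlis formula: since `E[g²] = 0`, a conjugated factor can only pair with an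
unconjugated one. -/
theorem integral_conj_mul_mul_mul_conj [Fintype ι] [DecidableEq ι] {g : ι → Ω → ℂ}
    (hmeas : ∀ m, AEMeasurable (g m) μ) (hindep : iIndepFun g μ)
    (hmean : ∀ m, ∫ ω, g m ω ∂μ = 0) (hsq : ∀ m, ∫ ω, g m ω ^ 2 ∂μ = 0)
    (habs2 : ∀ m, ∫ ω, ‖g m ω‖ ^ 2 ∂μ = 1) (habs4 : ∀ m, ∫ ω, ‖g m ω‖ ^ 4 ∂μ = 2)
    (i j k l : ι) :
    ∫ ω, conj (g i ω) * g j ω * g k ω * conj (g l ω) ∂μ =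
      (if i = j then 1 else 0) * (if k = l then 1 else 0) +
        (if i = k then 1 else 0) * (if j = l then 1 else 0) := by
  have := hindep.isProbabilityMeasure
  have hdiag (m : ι) (p : ℕ) :
      ∫ ω, conj (g m ω) ^ p * g m ω ^ p ∂μ = ((∫ ω, ‖g m ω‖ ^ (2 * p) ∂μ : ℝ) : ℂ) := by
    simp_rw [← mul_pow, Complex.conj_mul', ← pow_mul, ← Complex.ofReal_pow,
      integral_complex_ofReal]
  refine (integral_congr_ae (.of_forall fun ω =>
    conj_mul_mul_mul_conj_eq_prod (g · ω) i j k l)).trans ?_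
  refine (hindep.integral_fun_prod_comp (f := fun m z => conj z ^ _ * z ^ _) hmeas
    fun m => by fun_prop).trans ?_
  apply prod_mixed_moments_eq_pairings fun m a b => ∫ ω, conj (g m ω) ^ a * g m ω ^ b ∂μ
  · simp
  · simp [integral_conj, hmean]
  · simpa using hmean
  · simp [← map_pow, integral_conj, hsq]
  · simpa using hsq
  · intro m; rw [hdiag]; norm_num [habs2]
  · intro m; rw [hdiag]; norm_num [habs4]

theorem integrable_conj_mul_mul_mul_conj {x : ι → Ω → ℂ} (hx : ∀ i, MemLp (x i) 4 μ)
    (i j k l : ι) : Integrable (fun ω => conj (x i ω) * x j ω * x k ω * conj (x l ω)) μ := by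
  have : ENNReal.HolderTriple 4 4 2 := ⟨by
    rw [← two_mul, show (4 : ℝ≥0∞) = 2 * 2 by norm_num, ENNReal.mul_inv (by simp) (by simp),
      ← mul_assoc, ENNReal.mul_inv_cancel (by simp) (by simp), one_mul]⟩
  have hij : MemLp (fun ω => conj (x i ω) * x j ω) 2 μ := (hx j).mul' (hx i).star
  have hkl : MemLp (fun ω => x k ω * conj (x l ω)) 2 μ := (hx l).star.mul' (hx k)
  exact (hij.integrable_mul hkl).congr (.of_forall fun ω => by simp only [Pi.mul_apply]; ring)

theorem integral_ofReal_norm_sq_star_dotProduct_mulVec [Fintype ι] (A : Matrix ι ι ℂ)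
    {x : ι → Ω → ℂ} (hx : ∀ i, MemLp (x i) 4 μ) :
    ∫ ω, ((‖star (x · ω) ⬝ᵥ A *ᵥ (x · ω)‖ ^ 2 : ℝ) : ℂ) ∂μ =
      ∑ i, ∑ j, ∑ k, ∑ l, A i j * conj (A k l) *
        ∫ ω, conj (x i ω) * x j ω * x k ω * conj (x l ω) ∂μ := by
  have := integrable_conj_mul_mul_mul_conj hx
  simp_rw [ofReal_norm_sq_star_dotProduct_mulVec]
  simp (disch := fun_prop) only [integral_finsetSum, integral_const_mul]

end FourthMoment

theorem cn_quadratic_form_second_moment_general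
    {Ω : Type*} [MeasurableSpace Ω] (μ : Measure Ω)
    (M : ℕ) (g : Fin M → Ω → ℂ)
    (hindep : iIndepFun g μ)
    (hL4 : ∀ m, MemLp (g m) 4 μ)
    (hmean : ∀ m, ∫ ω, g m ω ∂μ = 0)
    (hsq : ∀ m, ∫ ω, (g m ω) ^ 2 ∂μ = 0)
    (habs2 : ∀ m, ∫ ω, ‖g m ω‖ ^ 2 ∂μ = 1)
    (habs4 : ∀ m, ∫ ω, ‖g m ω‖ ^ 4 ∂μ = 2)
    (R Rsqrt : Matrix (Fin M) (Fin M) ℂ)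
    (hRsqrt : Rsqrt.PosSemidef) (hRsq : Rsqrt * Rsqrt = R)
    (B : Matrix (Fin M) (Fin M) ℂ)
    (h : Ω → Fin M → ℂ) (hh : ∀ ω, h ω = Rsqrt.mulVec (fun m => g m ω)) :
    ((∫ ω, ‖star (h ω) ⬝ᵥ B.mulVec (h ω)‖ ^ 2 ∂μ : ℝ) : ℂ) =
      ((‖(B * R).trace‖ ^ 2 : ℝ) : ℂ) + (R * B * R * Bᴴ).trace := by
  have hR : Rsqrt * Rsqrtᴴ = R := by rw [hRsqrt.isHermitian.eq, hRsq]
  set A := Rsqrtᴴ * B * Rsqrt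
  calc ((∫ ω, ‖star (h ω) ⬝ᵥ B *ᵥ h ω‖ ^ 2 ∂μ : ℝ) : ℂ)
      = ∫ ω, ((‖star (g · ω) ⬝ᵥ A *ᵥ (g · ω)‖ ^ 2 : ℝ) : ℂ) ∂μ := by
        simp_rw [hh, star_mulVec_dotProduct_mulVec_mulVec]
        exact integral_complex_ofReal.symm
    _ = ∑ i, ∑ j, ∑ k, ∑ l, A i j * conj (A k l) *
          ((if i = j then 1 else 0) * (if k = l then 1 else 0) +
            (if i = k then 1 else 0) * (if j = l then 1 else 0)) := by
        simp_rw [integral_ofReal_norm_sq_star_dotProduct_mulVec A hL4,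
          integral_conj_mul_mul_mul_conj (fun m => (hL4 m).aemeasurable) hindep hmean hsq
            habs2 habs4]
    _ = ((‖A.trace‖ ^ 2 : ℝ) : ℂ) + (A * Aᴴ).trace := sum_mul_conj_mul_pairings A
    _ = ((‖(B * R).trace‖ ^ 2 : ℝ) : ℂ) + (R * B * R * Bᴴ).trace := by
        rw [trace_conjTranspose_mul_mul_mul_conjTranspose, hR, trace_mul_cycle, hR,
          trace_mul_comm]

/-- Let `h = R^{1/2} g` with `R` Hermitian PSD and `g` a
vector of mutually independent complex random variables with the `CN(0,1)`
moment conditions. For any matrix `B`, the second moment of the quadratic form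
`hᴴ B h` satisfies `E[|hᴴ B h|²] = |tr(B R)|² + tr(R B R Bᴴ)`. -/
theorem cn_quadratic_form_second_moment
    {Ω : Type*} [MeasurableSpace Ω] (μ : Measure Ω) [IsProbabilityMeasure μ]
    (M : ℕ) (g : Fin M → Ω → ℂ)
    (hmeas : ∀ m, Measurable (g m))
    (hindep : iIndepFun g μ)
    (hL4 : ∀ m, MemLp (g m) 4 μ)
    (hmean : ∀ m, ∫ ω, g m ω ∂μ = 0)
    (hsq : ∀ m, ∫ ω, (g m ω) ^ 2 ∂μ = 0)
    (habs2 : ∀ m, ∫ ω, ‖g m ω‖ ^ 2 ∂μ = 1)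
    (habs4 : ∀ m, ∫ ω, ‖g m ω‖ ^ 4 ∂μ = 2)
    (R Rsqrt : Matrix (Fin M) (Fin M) ℂ)
    (hR : R.PosSemidef) (hRsqrt : Rsqrt.PosSemidef) (hRsq : Rsqrt * Rsqrt = R)
    (B : Matrix (Fin M) (Fin M) ℂ)
    (h : Ω → Fin M → ℂ) (hh : ∀ ω, h ω = Rsqrt.mulVec (fun m => g m ω)) :
    ((∫ ω, ‖star (h ω) ⬝ᵥ B.mulVec (h ω)‖ ^ 2 ∂μ : ℝ) : ℂ) =
      ((‖(B * R).trace‖ ^ 2 : ℝ) : ℂ) + (R * B * R * Bᴴ).trace :=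
  cn_quadratic_form_second_moment_general μ M g hindep hL4 hmean hsq habs2 habs4 R Rsqrt hRsqrt hRsq
    B h hh
end

section
/- With x_m = ε_m² for m = 1,…,M, the denominator of the closed-form MR effective SINR, namely D_k(ε, p) = p_k tr(D_ε² · abs(diag(A_k))²) + ∑_{i=1}^K (p_i q_i)/(τ_p q_k) · [ tr(D_ε² · abs(diag(R_i R_k Ψ_k^{-1}))²) + tr(D_ε² · diag(abs(R_k Ψ_k^{-1})² D_ε² abs(R_i)²)) ] + tr((∑_{i=1}^K p_i R_i + σ² I_M + ∑_{i=1}^K p_i D_ε² D_{R_i}) · A_k), equals the posynomial f_k^d(x, p) = ∑_{m=1}^M [ p_k |[A_k]_{mm}|² + ∑_{i=1}^K ( (p_i q_i)/(τ_p q_k) |[R_i R_k Ψ_k^{-1}]_{mm}|² + p_i [R_i]_{mm} [A_k]_{mm} ) ] x_m + x^T ( ∑_{i=1}^K (p_i q_i)/(τ_p q_k) · abs(R_k Ψ_k^{-1})² ∘ abs(R_i)² ) x + tr((∑_{i=1}^K p_i R_i + σ² I_M) A_k), where ∘ denotes the entrywise (Hadamard) product. Consequently the closed-form MR SINR equals the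 monomial/posynomial ratio p_k w_k / f_k^d(x, p) with w_k = tr(A_k)². -/
open Matrix Finset
open scoped ComplexOrder

/-- The entrywise squared-absolute-value `abs(X)²` of a complex matrix. -/
noncomputable def entrywiseAbsSq {M : ℕ} (X : Matrix (Fin M) (Fin M) ℂ) :
    Matrix (Fin M) (Fin M) ℂ :=
  Matrix.of fun i j => ((‖X i j‖ ^ 2 : ℝ) : ℂ)

/-- The diagonal matrix `abs(diag(X))²` of squared absolute values of the
diagonal entries of `X`. -/
noncomputable def absDiagSq {M : ℕ} (X : Matrix (Fin M) (Fin M) ℂ) :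
    Matrix (Fin M) (Fin M) ℂ :=
  Matrix.diagonal fun m => ((‖X m m‖ ^ 2 : ℝ) : ℂ)

/-- The diagonal part `diag(Y)` of a matrix `Y`. -/
def diagPart {M : ℕ} (Y : Matrix (Fin M) (Fin M) ℂ) :
    Matrix (Fin M) (Fin M) ℂ :=
  Matrix.diagonal fun m => Y m m

/-! With `x = ε²` one has `D_ε² = diag(x)`, so every trace containing `D_ε²` once is linear in `x`.
The only term containing it twice, `tr(D_ε² diag(F D_ε² G))` with `F = abs(R_k Ψ_k⁻¹)²` and
`G = abs(R_i)²`, is the quadratic form `xᵀ (F ∘ Gᵀ) x`; since `R_i` is Hermitian, `G` is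
symmetric, which turns it into the Hadamard form of the posynomial. -/

namespace Matrix

variable {n α : Type*} [Fintype n] [DecidableEq n] [CommSemiring α]

theorem trace_diagonal_mul (d : n → α) (X : Matrix n n α) :
    (diagonal d * X).trace = ∑ m, d m * X m m := by
  simp [trace, diagonal_mul]

theorem trace_diagonal_mul_diagonal_diag_mul (d : n → α) (Y X : Matrix n n α) :
    (diagonal d * diagonal Y.diag * X).trace = ∑ m, d m * Y m m * X m m := by
  rw [diagonal_mul_diagonal, trace_diagonal_mul]
  rfl

theorem trace_diagonal_mul_diagonal_diag_mul_diagonal_mul (x : n → α) (F G : Matrix n n α) :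
    (diagonal x * diagonal (F * diagonal x * G).diag).trace = x ⬝ᵥ ((F ⊙ Gᵀ) *ᵥ x) := by
  simp only [diagonal_mul_diagonal, trace_diagonal, diag_apply, mul_apply (M := F * diagonal x),
    mul_diagonal, dotProduct, mulVec, hadamard_apply, transpose_apply, Finset.mul_sum]
  exact Finset.sum_congr rfl fun m _ => Finset.sum_congr rfl fun n _ => by ring

end Matrix

theorem diagPart_eq_diagonal_diag {M : ℕ} (Y : Matrix (Fin M) (Fin M) ℂ) :
    diagPart Y = diagonal Y.diag :=
  rfl

theorem trace_diagonal_mul_absDiagSq {M : ℕ} (x : Fin M → ℂ) (X : Matrix (Fin M) (Fin M) ℂ) :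
    (diagonal x * absDiagSq X).trace = ∑ m, x m * ((‖X m m‖ ^ 2 : ℝ) : ℂ) := by
  simp [absDiagSq]

theorem Matrix.IsHermitian.transpose_entrywiseAbsSq {M : ℕ} {X : Matrix (Fin M) (Fin M) ℂ}
    (hX : X.IsHermitian) : (entrywiseAbsSq X)ᵀ = entrywiseAbsSq X := by
  ext i j
  simp [entrywiseAbsSq, ← hX.apply i j]

theorem mr_sinr_denominator_posynomial_general
    (M K : ℕ) (k : Fin K)
    (R : Fin K → Matrix (Fin M) (Fin M) ℂ) (hR : ∀ i, (R i).PosSemidef)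
    (Ψ : Matrix (Fin M) (Fin M) ℂ)
    (σ2 τp : ℝ)
    (q : Fin K → ℝ)
    (p : Fin K → ℝ)
    (ε : Fin M → ℝ)
    (x : Fin M → ℝ) (hx : ∀ m, x m = (ε m) ^ 2) :
    let A : Matrix (Fin M) (Fin M) ℂ := R k * Ψ⁻¹ * R k
    let Dε : Matrix (Fin M) (Fin M) ℂ := Matrix.diagonal fun m => ((ε m : ℝ) : ℂ)
    let c : Fin K → ℂ := fun i => ((p i * q i / (τp * q k) : ℝ) : ℂ)
    -- the denominator of the closed-form MR effective SINR
    let D : ℂ :=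
      ((p k : ℝ) : ℂ) * (Dε ^ 2 * absDiagSq A).trace
      + (∑ i, c i * ((Dε ^ 2 * absDiagSq (R i * (R k * Ψ⁻¹))).trace
          + (Dε ^ 2 * diagPart (entrywiseAbsSq (R k * Ψ⁻¹) * Dε ^ 2 *
              entrywiseAbsSq (R i))).trace))
      + (((∑ i, ((p i : ℝ) : ℂ) • R i) + ((σ2 : ℝ) : ℂ) • (1 : Matrix (Fin M) (Fin M) ℂ)
          + ∑ i, ((p i : ℝ) : ℂ) • (Dε ^ 2 * diagPart (R i))) * A).trace
    let xc : Fin M → ℂ := fun m => ((x m : ℝ) : ℂ)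
    -- the posynomial `f_k^d(x, p)`
    let f : ℂ :=
      (∑ m, (((p k : ℝ) : ℂ) * ((‖A m m‖ ^ 2 : ℝ) : ℂ)
        + ∑ i, (c i * ((‖(R i * (R k * Ψ⁻¹)) m m‖ ^ 2 : ℝ) : ℂ)
            + ((p i : ℝ) : ℂ) * (R i) m m * A m m)) * xc m)
      + xc ⬝ᵥ ((∑ i, c i • Matrix.hadamard (entrywiseAbsSq (R k * Ψ⁻¹))
          (entrywiseAbsSq (R i))).mulVec xc)
      + (((∑ i, ((p i : ℝ) : ℂ) • R i) + ((σ2 : ℝ) : ℂ) • (1 : Matrix (Fin M) (Fin M) ℂ)) * A).trace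
    -- the SINR numerator weight `w_k = tr(A_k)²`
    let w : ℂ := A.trace ^ 2
    D = f ∧ ((p k : ℝ) : ℂ) * w / D = ((p k : ℝ) : ℂ) * w / f := by
  intro A Dε c D xc f w
  have hDε : Dε ^ 2 = diagonal xc := by
    simp only [Dε, xc, hx, sq, diagonal_mul_diagonal, Complex.ofReal_mul]
  have hDf : D = f := by
    simp only [D, f, hDε, diagPart_eq_diagonal_diag, trace_diagonal_mul_absDiagSq, ← mul_assoc,
      trace_diagonal_mul_diagonal_diag_mul, trace_diagonal_mul_diagonal_diag_mul_diagonal_mul,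
      (hR _).1.transpose_entrywiseAbsSq, add_mul, trace_add, sum_mul, trace_sum, smul_mul,
      trace_smul, smul_eq_mul, sum_mulVec, dotProduct_sum, smul_mulVec, dotProduct_smul]
    simp only [mul_add, mul_sum, sum_add_distrib]
    conv_rhs => rw [sum_comm (γ := Fin M) (α := Fin K), sum_comm (γ := Fin M) (α := Fin K)]
    simp only [mul_comm, mul_left_comm, mul_assoc]
    ring
  exact ⟨hDf, by rw [hDf]⟩

/-- With `x_m = ε_m²`, the denominator `D_k(ε, p)` of the
closed-form MR effective SINR equals the posynomial `f_k^d(x, p)`, and hence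
the closed-form MR SINR `p_k w_k / D_k` equals the monomial/posynomial ratio
`p_k w_k / f_k^d(x, p)` with `w_k = tr(A_k)²`, `A_k = R_k Ψ_k⁻¹ R_k`. -/
theorem mr_sinr_denominator_posynomial
    (M K : ℕ) (hM : 1 ≤ M) (hK : 1 ≤ K) (k : Fin K)
    (R : Fin K → Matrix (Fin M) (Fin M) ℂ) (hR : ∀ i, (R i).PosSemidef)
    (Ψ : Matrix (Fin M) (Fin M) ℂ) (hΨ : Ψ.PosDef)
    (σ2 τp : ℝ) (hσ2 : 0 < σ2) (hτp : 0 < τp)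
    (q : Fin K → ℝ) (hq : ∀ i, 0 < q i)
    (p : Fin K → ℝ) (hp : ∀ i, 0 ≤ p i)
    (ε : Fin M → ℝ) (hε : ∀ m, 0 ≤ ε m)
    (x : Fin M → ℝ) (hx : ∀ m, x m = (ε m) ^ 2) :
    let A : Matrix (Fin M) (Fin M) ℂ := R k * Ψ⁻¹ * R k
    let Dε : Matrix (Fin M) (Fin M) ℂ := Matrix.diagonal fun m => ((ε m : ℝ) : ℂ)
    let c : Fin K → ℂ := fun i => ((p i * q i / (τp * q k) : ℝ) : ℂ)
    -- the denominator of the closed-form MR effective SINR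
    let D : ℂ :=
      ((p k : ℝ) : ℂ) * (Dε ^ 2 * absDiagSq A).trace
      + (∑ i, c i * ((Dε ^ 2 * absDiagSq (R i * (R k * Ψ⁻¹))).trace
          + (Dε ^ 2 * diagPart (entrywiseAbsSq (R k * Ψ⁻¹) * Dε ^ 2 *
              entrywiseAbsSq (R i))).trace))
      + (((∑ i, ((p i : ℝ) : ℂ) • R i) + ((σ2 : ℝ) : ℂ) • (1 : Matrix (Fin M) (Fin M) ℂ)
          + ∑ i, ((p i : ℝ) : ℂ) • (Dε ^ 2 * diagPart (R i))) * A).trace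
    let xc : Fin M → ℂ := fun m => ((x m : ℝ) : ℂ)
    -- the posynomial `f_k^d(x, p)`
    let f : ℂ :=
      (∑ m, (((p k : ℝ) : ℂ) * ((‖A m m‖ ^ 2 : ℝ) : ℂ)
        + ∑ i, (c i * ((‖(R i * (R k * Ψ⁻¹)) m m‖ ^ 2 : ℝ) : ℂ)
            + ((p i : ℝ) : ℂ) * (R i) m m * A m m)) * xc m)
      + xc ⬝ᵥ ((∑ i, c i • Matrix.hadamard (entrywiseAbsSq (R k * Ψ⁻¹))
          (entrywiseAbsSq (R i))).mulVec xc)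
      + (((∑ i, ((p i : ℝ) : ℂ) • R i) + ((σ2 : ℝ) : ℂ) • (1 : Matrix (Fin M) (Fin M) ℂ)) * A).trace
    -- the SINR numerator weight `w_k = tr(A_k)²`
    let w : ℂ := A.trace ^ 2
    D = f ∧ ((p k : ℝ) : ℂ) * w / D = ((p k : ℝ) : ℂ) * w / f :=
  mr_sinr_denominator_posynomial_general M K k R hR Ψ σ2 τp q p ε x hx
end
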